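/- Let a > 0 satisfy b < a². Then there exists τ₀ > 0 (depending only on α, β, γ, a) such that for every 0 < τ ≤ τ₀ the following discrete maximum bound principle holds for the second-order scheme: if Q : ℕ → (real 3×3 matrices) satisfies Q_{m+1} = Q_m + τ·f(Q_m) + (τ²/2)·Df(Q_m)[f(Q_m)] for all m, where Df(Q)[f(Q)] is the Fréchet derivative of the map Q ↦ f(Q) at Q applied to f(Q), and Q₀ is symmetric and traceless with ‖Q₀‖_F ≤ a, then for every m ≥ 0 the matrix Q_m is symmetric and traceless and ‖Q_m‖_F ≤ a. -/

import Mathlib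

/-!
For symmetric traceless `Q` with `s = ‖Q‖²`, the Frobenius inner product is
`⟪Q, f Q⟫ = -α s + β tr(Q³) - γ s²`, and `|tr(Q³)| ≤ ‖Q‖ ‖Q²‖ ≤ s^{3/2}`; by AM-GM this gives
`⟪Q, f Q⟫ ≤ (γ/2) s (b - s)`. Writing one step as `Q + τ u` and bounding `f` and `Df[f]` on the
ball of radius `a` (compactness), `‖Q + τ u‖² ≤ s + 2τ⟪Q, f Q⟫ + Mτ²`. For small `τ` the map
`s ↦ s + τγ s (b - s)` is increasing on `s ≤ a²`, so the right side is at most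
`a² - τγa²(a² - b) + Mτ² ≤ a²`, using `b < a²`. Symmetry and tracelessness propagate because `f`
maps the closed subspace of symmetric traceless matrices into itself, hence so does its derivative
along that subspace.
-/

open Matrix

attribute [local instance] Matrix.frobeniusNormedAddCommGroup Matrix.frobeniusNormedSpace

noncomputable def fQ (α β γ : ℝ) (Q : Matrix (Fin 3) (Fin 3) ℝ) : Matrix (Fin 3) (Fin 3) ℝ :=
  -(α • Q) + β • (Q * Q - ((Matrix.trace (Q * Q)) / 3) • (1 : Matrix (Fin 3) (Fin 3) ℝ))
    - (γ * Matrix.trace (Q * Q)) • Q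

noncomputable def frobNorm (A : Matrix (Fin 3) (Fin 3) ℝ) : ℝ :=
  Real.sqrt (Matrix.trace (Aᵀ * A))

theorem fderiv_apply_mem_of_mapsTo {𝕜 E F : Type*} [NontriviallyNormedField 𝕜]
    [NormedAddCommGroup E] [NormedSpace 𝕜 E] [NormedAddCommGroup F] [NormedSpace 𝕜 F]
    {f : E → F} {S : Submodule 𝕜 E} {T : Submodule 𝕜 F} (hT : IsClosed (T : Set F))
    (hf : Set.MapsTo f S T) {x v : E} (hx : x ∈ S) (hv : v ∈ S) : fderiv 𝕜 f x v ∈ T := by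
  by_cases hd : DifferentiableAt 𝕜 f x
  · have hline : HasDerivAt (fun t : 𝕜 => f (x + t • v)) (fderiv 𝕜 f x v) 0 :=
      hd.hasFDerivAt.hasLineDerivAt v
    refine hT.mem_of_tendsto (hasDerivAt_iff_tendsto_slope.mp hline)
      (Filter.Eventually.of_forall fun t => ?_)
    rw [slope_def_module]
    exact T.smul_mem _ (T.sub_mem (hf (S.add_mem hx (S.smul_mem t hv))) (by simpa using hf hx))
  · simp [fderiv_zero_of_not_differentiableAt hd, T.zero_mem]

section

variable {E : Type*} [NormedAddCommGroup E] [NormedSpace ℝ E]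

noncomputable def taylorStep (f : E → E) (τ : ℝ) (x : E) : E :=
  x + τ • f x + (τ ^ 2 / 2) • fderiv ℝ f x (f x)

theorem taylorStep_mem {f : E → E} {S : Submodule ℝ E} (hS : IsClosed (S : Set E))
    (hf : Set.MapsTo f S S) (τ : ℝ) {x : E} (hx : x ∈ S) : taylorStep f τ x ∈ S :=
  S.add_mem (S.add_mem hx (S.smul_mem _ (hf hx)))
    (S.smul_mem _ (fderiv_apply_mem_of_mapsTo hS hf hx (hf hx)))

end

theorem add_two_mul_add_sq_mul_le {a b κ M s p τ : ℝ} (hκ : 0 ≤ κ) (hs : s ≤ a ^ 2)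
    (hp : p ≤ κ * s * (b - s)) (hτ : 0 ≤ τ) (hτ₁ : 2 * τ * κ * (2 * a ^ 2 - b) ≤ 1)
    (hτ₂ : τ * M ≤ 2 * κ * a ^ 2 * (a ^ 2 - b)) :
    s + 2 * τ * p + τ ^ 2 * M ≤ a ^ 2 := by
  have hτκ : 0 ≤ τ * κ := mul_nonneg hτ hκ
  nlinarith [mul_nonneg (sub_nonneg.mpr hs) (sub_nonneg.mpr hτ₁),
    mul_nonneg hτκ (mul_self_nonneg (a ^ 2 - s)), mul_le_mul_of_nonneg_left hτ₂ hτ,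
    mul_le_mul_of_nonneg_left hp hτ]

section

variable {E : Type*} [NormedAddCommGroup E] [InnerProductSpace ℝ E]

theorem norm_sq_add_smul_add_smul_le {x v w : E} {τ a F G : ℝ} (hτ₀ : 0 ≤ τ) (hτ₁ : τ ≤ 1)
    (hx : ‖x‖ ≤ a) (hv : ‖v‖ ≤ F) (hw : ‖w‖ ≤ G) :
    ‖x + τ • v + (τ ^ 2 / 2) • w‖ ^ 2
      ≤ ‖x‖ ^ 2 + 2 * τ * inner ℝ x v + τ ^ 2 * (a * G + (F + G) ^ 2) := by
  set u := v + (τ / 2) • w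
  have hu : x + τ • v + (τ ^ 2 / 2) • w = x + τ • u := by
    rw [add_assoc, smul_add, smul_smul]
    ring_nf
  have hxw : inner ℝ x w ≤ a * G :=
    (real_inner_le_norm x w).trans (mul_le_mul hx hw (norm_nonneg w) ((norm_nonneg x).trans hx))
  have hxu : inner ℝ x u ≤ inner ℝ x v + τ / 2 * (a * G) := by
    rw [inner_add_right, real_inner_smul_right]
    gcongr
  have hnu : ‖u‖ ≤ F + G := by
    refine (norm_add_le _ _).trans (add_le_add hv ?_)
    rw [norm_smul, Real.norm_of_nonneg (by positivity)]
    nlinarith [norm_nonneg w]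
  rw [hu, norm_add_sq_real, real_inner_smul_right, norm_smul, mul_pow, Real.norm_eq_abs, sq_abs]
  have := pow_le_pow_left₀ (norm_nonneg u) hnu 2
  nlinarith

theorem exists_pos_norm_add_smul_add_smul_le {a b κ : ℝ} (ha : 0 < a) (hκ : 0 < κ)
    (hab : b < a ^ 2) (F G : ℝ) :
    ∃ τ₀ : ℝ, 0 < τ₀ ∧ ∀ τ : ℝ, 0 < τ → τ ≤ τ₀ → ∀ x v w : E, ‖x‖ ≤ a → ‖v‖ ≤ F → ‖w‖ ≤ G →
      inner ℝ x v ≤ κ * ‖x‖ ^ 2 * (b - ‖x‖ ^ 2) → ‖x + τ • v + (τ ^ 2 / 2) • w‖ ≤ a := by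
  set M := a * G + (F + G) ^ 2
  have hgap : 0 < a ^ 2 - b := sub_pos.mpr hab
  have hgap' : 0 < 2 * a ^ 2 - b := by nlinarith
  refine ⟨min 1 (min (1 / (2 * κ * (2 * a ^ 2 - b))) (2 * κ * a ^ 2 * (a ^ 2 - b) / (|M| + 1))),
    by positivity, fun τ hτ hττ₀ x v w hx hv hw hxv => ?_⟩
  have hτ₁ : 2 * τ * κ * (2 * a ^ 2 - b) ≤ 1 := by
    have := hττ₀.trans ((min_le_right _ _).trans (min_le_left _ _))
    rw [le_div_iff₀ (by positivity)] at this
    linarith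
  have hτ₂ : τ * M ≤ 2 * κ * a ^ 2 * (a ^ 2 - b) := by
    have := hττ₀.trans ((min_le_right _ _).trans (min_le_right _ _))
    rw [le_div_iff₀ (by positivity)] at this
    nlinarith [le_abs_self M]
  have hsq := (norm_sq_add_smul_add_smul_le hτ.le (hττ₀.trans (min_le_left _ _)) hx hv hw).trans
    (add_two_mul_add_sq_mul_le hκ.le (pow_le_pow_left₀ (norm_nonneg x) hx 2) hxv hτ.le hτ₁ hτ₂)
  exact (pow_le_pow_iff_left₀ (norm_nonneg _) ha.le two_ne_zero).mp hsq

end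

section

variable {m n : Type*} [Fintype m] [Fintype n]

theorem frobenius_norm_eq_norm_toLp_vec (A : Matrix m n ℝ) : ‖A‖ = ‖WithLp.toLp 2 A.vec‖ := by
  rw [frobenius_norm_def, EuclideanSpace.norm_eq, Real.sqrt_eq_rpow, Fintype.sum_prod_type,
    Finset.sum_comm]
  simp [Matrix.vec]

-- Mathlib puts no inner product on matrices; this isometry supplies the Frobenius one.
noncomputable def frobeniusToEuclidean : Matrix m n ℝ →ₗᵢ[ℝ] EuclideanSpace ℝ (n × m) where
  toFun A := WithLp.toLp 2 A.vec
  map_add' A B := by simp [vec_add]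
  map_smul' c A := by simp [vec_smul]
  norm_map' A := (frobenius_norm_eq_norm_toLp_vec A).symm

theorem inner_frobeniusToEuclidean (A B : Matrix m n ℝ) :
    inner ℝ (frobeniusToEuclidean A) (frobeniusToEuclidean B) = (Aᵀ * B).trace := by
  rw [EuclideanSpace.inner_eq_star_dotProduct, star_trivial, dotProduct_comm]
  exact vec_dotProduct_vec A B

theorem trace_transpose_mul_self_eq_norm_sq (A : Matrix m n ℝ) :
    (Aᵀ * A).trace = ‖A‖ ^ 2 := by
  rw [← inner_frobeniusToEuclidean, real_inner_self_eq_norm_sq, LinearIsometry.norm_map]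

theorem abs_trace_transpose_mul_le (A B : Matrix m n ℝ) :
    |(Aᵀ * B).trace| ≤ ‖A‖ * ‖B‖ := by
  rw [← inner_frobeniusToEuclidean, ← frobeniusToEuclidean.norm_map A,
    ← frobeniusToEuclidean.norm_map B]
  exact abs_real_inner_le_norm _ _

end

theorem frobNorm_eq_norm (A : Matrix (Fin 3) (Fin 3) ℝ) : frobNorm A = ‖A‖ := by
  rw [frobNorm, trace_transpose_mul_self_eq_norm_sq, Real.sqrt_sq (norm_nonneg _)]

def symmetricTraceless (n R : Type*) [Fintype n] [CommRing R] : Submodule R (Matrix n n R) where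
  carrier := {A | Aᵀ = A ∧ A.trace = 0}
  add_mem' := by
    rintro A B ⟨hA, hA'⟩ ⟨hB, hB'⟩
    exact ⟨by rw [transpose_add, hA, hB], by rw [trace_add, hA', hB', add_zero]⟩
  zero_mem' := ⟨transpose_zero, trace_zero _ _⟩
  smul_mem' := by
    rintro c A ⟨hA, hA'⟩
    exact ⟨by rw [transpose_smul, hA], by rw [trace_smul, hA', smul_zero]⟩

theorem fQ_mem_symmetricTraceless (α β γ : ℝ) :
    Set.MapsTo (fQ α β γ) (symmetricTraceless (Fin 3) ℝ) (symmetricTraceless (Fin 3) ℝ) := by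
  rintro Q ⟨hQ, hQ'⟩
  constructor
  · simp [fQ, transpose_mul, hQ]
  · simp [fQ, trace_mul_comm, hQ', trace_one]

attribute [local instance] Matrix.frobeniusNormedRing Matrix.frobeniusNormedAlgebra

theorem contDiff_fQ (α β γ : ℝ) {k : WithTop ℕ∞} : ContDiff ℝ k (fQ α β γ) := by
  have htr : ContDiff ℝ k fun Q : Matrix (Fin 3) (Fin 3) ℝ => (Q * Q).trace :=
    (traceLinearMap (Fin 3) ℝ ℝ).toContinuousLinearMap.contDiff.comp
      (contDiff_id.mul contDiff_id)
  unfold fQ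
  fun_prop

theorem trace_transpose_mul_fQ_le {α β γ : ℝ} (hγ : 0 < γ) {Q : Matrix (Fin 3) (Fin 3) ℝ}
    (hQ : Q ∈ symmetricTraceless (Fin 3) ℝ) :
    (Qᵀ * fQ α β γ Q).trace ≤ γ / 2 * ‖Q‖ ^ 2 * (β ^ 2 / γ ^ 2 - 2 * α / γ - ‖Q‖ ^ 2) := by
  obtain ⟨hQt, hQ0⟩ := hQ
  set r := ‖Q‖
  have hsq : (Q * Q).trace = r ^ 2 := by
    rw [← trace_transpose_mul_self_eq_norm_sq, hQt]
  have hexp : (Qᵀ * fQ α β γ Q).trace = -α * r ^ 2 + β * (Qᵀ * (Q * Q)).trace - γ * r ^ 4 := by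
    simp only [fQ, Matrix.mul_add, Matrix.mul_sub, Matrix.mul_neg, Matrix.mul_smul,
      Matrix.mul_one, trace_add, trace_sub, trace_neg, trace_smul, trace_transpose, hQ0,
      trace_transpose_mul_self_eq_norm_sq, hsq, smul_eq_mul]
    ring
  have hcube : β * (Qᵀ * (Q * Q)).trace ≤ |β| * r ^ 3 := by
    refine (le_abs_self _).trans ?_
    rw [abs_mul]
    gcongr
    refine (abs_trace_transpose_mul_le _ _).trans ?_
    rw [pow_succ']
    gcongr
    rw [sq]
    exact frobenius_norm_mul Q Q
  have hamgm : 2 * γ * (|β| * r ^ 3) ≤ β ^ 2 * r ^ 2 + γ ^ 2 * r ^ 4 := by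
    nlinarith [sq_nonneg (|β| * r - γ * r ^ 2), sq_abs β]
  have hrhs : γ / 2 * r ^ 2 * (β ^ 2 / γ ^ 2 - 2 * α / γ - r ^ 2)
      = (β ^ 2 * r ^ 2 + γ ^ 2 * r ^ 4) / (2 * γ) - α * r ^ 2 - γ * r ^ 4 := by
    field_simp
    ring
  rw [hexp, hrhs]
  have : |β| * r ^ 3 ≤ (β ^ 2 * r ^ 2 + γ ^ 2 * r ^ 4) / (2 * γ) := by
    rw [le_div_iff₀ (by positivity)]; linarith
  linarith

theorem exists_pos_norm_taylorStep_fQ_le {α β γ a : ℝ} (hγ : 0 < γ) (ha : 0 < a)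
    (hba : β ^ 2 / γ ^ 2 - 2 * α / γ < a ^ 2) :
    ∃ τ₀ : ℝ, 0 < τ₀ ∧ ∀ τ : ℝ, 0 < τ → τ ≤ τ₀ → ∀ Q ∈ symmetricTraceless (Fin 3) ℝ,
      ‖Q‖ ≤ a → ‖taylorStep (fQ α β γ) τ Q‖ ≤ a := by
  have hf := contDiff_fQ α β γ (k := 1)
  have hball := isCompact_closedBall (0 : Matrix (Fin 3) (Fin 3) ℝ) a
  obtain ⟨F, hF⟩ := hball.exists_bound_of_continuousOn hf.continuous.continuousOn
  obtain ⟨G, hG⟩ := hball.exists_bound_of_continuousOn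
    ((hf.continuous_fderiv one_ne_zero).clm_apply hf.continuous).continuousOn
  obtain ⟨τ₀, hτ₀, hstep⟩ := exists_pos_norm_add_smul_add_smul_le
    (E := EuclideanSpace ℝ (Fin 3 × Fin 3)) ha (half_pos hγ) hba F G
  refine ⟨τ₀, hτ₀, fun τ hτ hττ₀ Q hQ hQa => ?_⟩
  have hQball : Q ∈ Metric.closedBall 0 a := mem_closedBall_zero_iff.mpr hQa
  rw [← frobeniusToEuclidean.norm_map, taylorStep, map_add, map_add, map_smul, map_smul]
  apply hstep τ hτ hττ₀ <;> simp only [LinearIsometry.norm_map, inner_frobeniusToEuclidean]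
  exacts [hQa, hF Q hQball, hG Q hQball, trace_transpose_mul_fQ_le hγ hQ]

/-- Discrete maximum bound principle for the second-order scheme
`Q_{m+1} = Q_m + τ·f(Q_m) + (τ²/2)·Df(Q_m)[f(Q_m)]`. -/
theorem stmt15 (α β γ : ℝ) (hγ : 0 < γ) (b : ℝ) (hb : b = β ^ 2 / γ ^ 2 - 2 * α / γ)
    (a : ℝ) (ha : 0 < a) (hba : b < a ^ 2) :
    ∃ τ₀ : ℝ, 0 < τ₀ ∧
      ∀ τ : ℝ, 0 < τ → τ ≤ τ₀ →
        ∀ Q : ℕ → Matrix (Fin 3) (Fin 3) ℝ,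
          (∀ m : ℕ, Q (m + 1) = Q m + τ • fQ α β γ (Q m)
              + (τ ^ 2 / 2) • fderiv ℝ (fQ α β γ) (Q m) (fQ α β γ (Q m))) →
          (Q 0)ᵀ = Q 0 → Matrix.trace (Q 0) = 0 → frobNorm (Q 0) ≤ a →
          ∀ m : ℕ, (Q m)ᵀ = Q m ∧ Matrix.trace (Q m) = 0 ∧ frobNorm (Q m) ≤ a := by
  obtain ⟨τ₀, hτ₀, hstep⟩ := exists_pos_norm_taylorStep_fQ_le hγ ha (hb ▸ hba)
  refine ⟨τ₀, hτ₀, fun τ hτ hττ₀ Q hQ hQ₀ hQ₀' hQ₀a => ?_⟩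
  have hS := (symmetricTraceless (Fin 3) ℝ).closed_of_finiteDimensional
  have hinv : ∀ m, Q m ∈ symmetricTraceless (Fin 3) ℝ ∧ ‖Q m‖ ≤ a := by
    intro m
    induction m with
    | zero => exact ⟨⟨hQ₀, hQ₀'⟩, frobNorm_eq_norm (Q 0) ▸ hQ₀a⟩
    | succ m ih =>
      rw [hQ m]
      exact ⟨taylorStep_mem hS (fQ_mem_symmetricTraceless α β γ) τ ih.1,
        hstep τ hτ hττ₀ _ ih.1 ih.2⟩
  intro m
  obtain ⟨⟨hQm, hQm'⟩, hQma⟩ := hinv m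
  exact ⟨hQm, hQm', (frobNorm_eq_norm (Q m)).symm ▸ hQma⟩
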